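/- The operator T defined by (Tu)(t) = ∫₀¹ H(t,s) f(s, u(s)) ds maps the cone K = {u ∈ C([0,1], ℝ) : u ≥ 0 and min_{t ∈ [θ,1−θ]} u(t) ≥ θ³(1−2θ)‖u‖} into itself, where f ∈ C([0,1] × [0,∞), [0,∞)), θ ∈ (0,1/2), α ≥ 0, βᵢ ≥ 0, 0 < η₁ < ... < ηₙ < 1, and k = 1 − (α + Σᵢ βᵢ) > 0. -/

import Mathlib

/-!
The kernel is squeezed between multiples of `e s = s(1-s)²/6`: `t³ e(s) ≤ G(t,s) ≤ e(s)` on the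
unit square. The boundary terms of `H` are nonnegative and independent of `t`, so
`t³ H(t',s) ≤ H(t,s)` for all `t, t', s ∈ [0,1]`. Multiplying by `f(s,u(s)) ≥ 0` and integrating
gives `θ³ Tu(t') ≤ Tu(t)` for `t ∈ [θ, 1-θ]`, and taking the supremum over `t'` yields the cone
inequality with the even smaller constant `θ³(1-2θ)`.
-/

open Set intervalIntegral Filter

noncomputable def G (t s : ℝ) : ℝ :=
  if s ≤ t then (t^3*(1-s)^2 - (t-s)^3)/6 else t^3*(1-s)^2/6

noncomputable def e (s : ℝ) : ℝ := s*(1-s)^2/6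

noncomputable def H (α k : ℝ) {n : ℕ} (β η : Fin n → ℝ) (t s : ℝ) : ℝ :=
  G t s + (α/k) * (∫ τ in (0:ℝ)..1, G τ s) + (1/k) * ∑ i, β i * G (η i) s

theorem mul_sSup_le_of_forall_mul_le {S : Set ℝ} (hS : S.Nonempty) {c x : ℝ} (hc : 0 ≤ c)
    (h : ∀ y ∈ S, c * y ≤ x) : c * sSup S ≤ x := by
  rw [← smul_eq_mul, ← Real.sSup_smul_of_nonneg hc]
  refine csSup_le hS.smul_set ?_
  rintro _ ⟨y, hy, rfl⟩
  exact h y hy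

theorem continuous_intervalIntegral_mul_of_continuousOn {a b : ℝ} (hab : a ≤ b)
    {κ : ℝ → ℝ → ℝ} (hκ : Continuous fun p : ℝ × ℝ => κ p.1 p.2) {g : ℝ → ℝ}
    (hg : ContinuousOn g (Icc a b)) :
    Continuous fun t => ∫ s in a..b, κ t s * g s := by
  set g' := IccExtend hab ((Icc a b).domRestrict g)
  have hg' : Continuous g' := (continuousOn_iff_continuous_domRestrict.1 hg).Icc_extend'
  have hgg' : ∀ t, ∫ s in a..b, κ t s * g s = ∫ s in a..b, κ t s * g' s := fun t =>
    integral_congr fun s hs => by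
      rw [uIcc_of_le hab] at hs
      simp only [g', IccExtend_of_mem hab _ hs, domRestrict_apply]
  simp_rw [hgg']
  exact continuous_parametric_intervalIntegral_of_continuous'
    (hκ.mul (hg'.comp continuous_snd)) a b

theorem mul_intervalIntegral_mul_le {a b c : ℝ} (hab : a ≤ b) {p q g : ℝ → ℝ}
    (hp : Continuous p) (hq : Continuous q) (hg : ContinuousOn g (Icc a b))
    (hg0 : ∀ s ∈ Icc a b, 0 ≤ g s) (hpq : ∀ s ∈ Icc a b, c * p s ≤ q s) :
    c * ∫ s in a..b, p s * g s ≤ ∫ s in a..b, q s * g s := by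
  rw [← integral_const_mul]
  refine integral_mono_on hab ?_ ?_ fun s hs => ?_
  · exact (continuousOn_const.mul (hp.continuousOn.mul hg)).intervalIntegrable_of_Icc hab
  · exact (hq.continuousOn.mul hg).intervalIntegrable_of_Icc hab
  · rw [← mul_assoc]
    exact mul_le_mul_of_nonneg_right (hpq s hs) (hg0 s hs)

theorem continuous_G : Continuous fun p : ℝ × ℝ => G p.1 p.2 := by
  refine Continuous.if_le (by fun_prop) (by fun_prop) continuous_snd continuous_fst ?_
  rintro ⟨t, s⟩ (rfl : s = t)
  ring

theorem e_nonneg {s : ℝ} (hs : s ∈ Icc (0:ℝ) 1) : 0 ≤ e s :=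
  div_nonneg (mul_nonneg hs.1 (sq_nonneg _)) (by norm_num)

section UnitSquare

variable {t s : ℝ} (ht : t ∈ Icc (0:ℝ) 1) (hs : s ∈ Icc (0:ℝ) 1)
include ht hs

theorem pow_three_mul_e_le_G : t^3 * e s ≤ G t s := by
  obtain ⟨ht0, ht1⟩ := ht
  obtain ⟨hs0, hs1⟩ := hs
  unfold G e
  split_ifs with hst
  · have h : (t - s)^3 ≤ (t * (1 - s))^3 := pow_le_pow_left₀ (by linarith) (by nlinarith) 3
    nlinarith
  · nlinarith [mul_nonneg (mul_nonneg (pow_nonneg ht0 3) (sq_nonneg (1-s))) (sub_nonneg.2 hs1)]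

theorem G_le_e : G t s ≤ e s := by
  obtain ⟨ht0, ht1⟩ := ht
  obtain ⟨hs0, hs1⟩ := hs
  unfold G e
  split_ifs with hst
  · have h : 0 ≤ 1 + t - 2*t^2 - 2*s + s*t + s*t^2 := by
      nlinarith [mul_nonneg (mul_nonneg (sub_nonneg.2 ht1) (sub_nonneg.2 ht1))
          (by linarith : (0:ℝ) ≤ 1 + t),
        mul_nonneg (sub_nonneg.2 hst)
          (mul_nonneg (sub_nonneg.2 ht1) (by linarith : (0:ℝ) ≤ 2 + t))]
    nlinarith [mul_nonneg (mul_nonneg hs0 (sub_nonneg.2 ht1)) h]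
  · have h : t^3 ≤ s := by
      nlinarith [mul_nonneg (mul_nonneg ht0 (sub_nonneg.2 ht1)) (by linarith : (0:ℝ) ≤ 1 + t)]
    nlinarith [mul_nonneg (sub_nonneg.2 h) (sq_nonneg (1-s))]

theorem G_nonneg : 0 ≤ G t s :=
  (mul_nonneg (pow_nonneg ht.1 3) (e_nonneg hs)).trans (pow_three_mul_e_le_G ht hs)

end UnitSquare

theorem continuous_H (α k : ℝ) {n : ℕ} (β η : Fin n → ℝ) :
    Continuous fun p : ℝ × ℝ => H α k β η p.1 p.2 := by
  have hint : Continuous fun s : ℝ => ∫ τ in (0:ℝ)..1, G τ s :=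
    continuous_parametric_intervalIntegral_of_continuous'
      (f := fun s τ => G τ s) (continuous_G.comp continuous_swap) 0 1
  unfold H
  refine (continuous_G.add (continuous_const.mul (hint.comp continuous_snd))).add
    (continuous_const.mul (continuous_finsetSum _ fun i _ => continuous_const.mul ?_))
  exact continuous_G.comp (continuous_const.prodMk continuous_snd)

section Kernel

variable {α k : ℝ} {n : ℕ} {β η : Fin n → ℝ}
variable (hα : 0 ≤ α) (hk : 0 ≤ k) (hβ : ∀ i, 0 ≤ β i) (hη : ∀ i, η i ∈ Icc (0:ℝ) 1)
include hα hk hβ hη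

theorem boundary_terms_nonneg {s : ℝ} (hs : s ∈ Icc (0:ℝ) 1) :
    0 ≤ (α/k) * (∫ τ in (0:ℝ)..1, G τ s) + (1/k) * ∑ i, β i * G (η i) s := by
  have hint : 0 ≤ ∫ τ in (0:ℝ)..1, G τ s :=
    integral_nonneg zero_le_one fun τ hτ => G_nonneg hτ hs
  have hsum : 0 ≤ ∑ i, β i * G (η i) s :=
    Finset.sum_nonneg fun i _ => mul_nonneg (hβ i) (G_nonneg (hη i) hs)
  positivity

theorem H_nonneg {t s : ℝ} (ht : t ∈ Icc (0:ℝ) 1) (hs : s ∈ Icc (0:ℝ) 1) :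
    0 ≤ H α k β η t s := by
  have := boundary_terms_nonneg hα hk hβ hη hs
  have := G_nonneg ht hs
  unfold H
  linarith

theorem pow_three_mul_H_le_H {t t' s : ℝ} (ht : t ∈ Icc (0:ℝ) 1) (ht' : t' ∈ Icc (0:ℝ) 1)
    (hs : s ∈ Icc (0:ℝ) 1) : t^3 * H α k β η t' s ≤ H α k β η t s := by
  have hR := boundary_terms_nonneg hα hk hβ hη hs
  have hG : t^3 * G t' s ≤ G t s :=
    (mul_le_mul_of_nonneg_left (G_le_e ht' hs) (pow_nonneg ht.1 3)).trans
      (pow_three_mul_e_le_G ht hs)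
  have ht3 : t^3 ≤ 1 := pow_le_one₀ ht.1 ht.2
  unfold H
  nlinarith

end Kernel

theorem stmt18_general (θ : ℝ) (hθ : θ ∈ Set.Ioo (0:ℝ) (1/2))
    (n : ℕ) (α : ℝ) (β η : Fin n → ℝ)
    (hα : 0 ≤ α) (hβ : ∀ i, 0 ≤ β i)
    (hη : ∀ i, η i ∈ Set.Ioo (0:ℝ) 1)
    (k : ℝ) (hk0 : 0 < k)
    (f : ℝ → ℝ → ℝ)
    (hf : ContinuousOn (fun p : ℝ × ℝ => f p.1 p.2) (Set.Icc 0 1 ×ˢ Set.Ici 0))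
    (hfnn : ∀ t ∈ Set.Icc (0:ℝ) 1, ∀ x ∈ Set.Ici (0:ℝ), 0 ≤ f t x)
    (u : ℝ → ℝ) (hucont : ContinuousOn u (Set.Icc 0 1))
    (hunn : ∀ t ∈ Set.Icc (0:ℝ) 1, 0 ≤ u t) :
    ContinuousOn (fun t => ∫ s in (0:ℝ)..1, H α k β η t s * f s (u s)) (Set.Icc 0 1) ∧
    (∀ t ∈ Set.Icc (0:ℝ) 1, 0 ≤ ∫ s in (0:ℝ)..1, H α k β η t s * f s (u s)) ∧
    (∀ t ∈ Set.Icc θ (1-θ),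
      θ^3 * (1-2*θ) *
        sSup ((fun t => |∫ s in (0:ℝ)..1, H α k β η t s * f s (u s)|) '' Set.Icc (0:ℝ) 1)
        ≤ ∫ s in (0:ℝ)..1, H α k β η t s * f s (u s)) := by
  obtain ⟨hθ0, hθ2⟩ := hθ
  have hη' : ∀ i, η i ∈ Icc (0:ℝ) 1 := fun i => Ioo_subset_Icc_self (hη i)
  have hg : ContinuousOn (fun s => f s (u s)) (Icc 0 1) :=
    hf.comp (continuousOn_id.prodMk hucont) fun s hs => ⟨hs, hunn s hs⟩
  have hg0 : ∀ s ∈ Icc (0:ℝ) 1, 0 ≤ f s (u s) := fun s hs => hfnn s hs _ (hunn s hs)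
  have hT0 : ∀ t ∈ Icc (0:ℝ) 1, 0 ≤ ∫ s in (0:ℝ)..1, H α k β η t s * f s (u s) :=
    fun t ht => integral_nonneg zero_le_one fun s hs =>
      mul_nonneg (H_nonneg hα hk0.le hβ hη' ht hs) (hg0 s hs)
  refine ⟨(continuous_intervalIntegral_mul_of_continuousOn zero_le_one
    (continuous_H α k β η) hg).continuousOn, hT0, fun t ht => ?_⟩
  have ht01 : t ∈ Icc (0:ℝ) 1 := Icc_subset_Icc hθ0.le (by linarith) ht
  have hc : θ^3 * (1-2*θ) ≤ t^3 := by
    nlinarith [pow_le_pow_left₀ hθ0.le ht.1 3, pow_pos hθ0 3]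
  refine mul_sSup_le_of_forall_mul_le ((nonempty_Icc.2 zero_le_one).image _)
    (mul_nonneg (by positivity) (by linarith)) ?_
  rintro _ ⟨t', ht', rfl⟩
  dsimp only
  rw [abs_of_nonneg (hT0 t' ht')]
  refine mul_intervalIntegral_mul_le zero_le_one ((continuous_H α k β η).comp
    (Continuous.prodMk_right t')) ((continuous_H α k β η).comp (Continuous.prodMk_right t))
    hg hg0 fun s hs => ?_
  exact (mul_le_mul_of_nonneg_right hc (H_nonneg hα hk0.le hβ hη' ht' hs)).trans
    (pow_three_mul_H_le_H hα hk0.le hβ hη' ht01 ht' hs)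

theorem stmt18 (θ : ℝ) (hθ : θ ∈ Set.Ioo (0:ℝ) (1/2))
    (n : ℕ) (α : ℝ) (β η : Fin n → ℝ)
    (hα : 0 ≤ α) (hβ : ∀ i, 0 ≤ β i)
    (hηmono : StrictMono η) (hη : ∀ i, η i ∈ Set.Ioo (0:ℝ) 1)
    (k : ℝ) (hk : k = 1 - (α + ∑ i, β i)) (hk0 : 0 < k)
    (f : ℝ → ℝ → ℝ)
    (hf : ContinuousOn (fun p : ℝ × ℝ => f p.1 p.2) (Set.Icc 0 1 ×ˢ Set.Ici 0))
    (hfnn : ∀ t ∈ Set.Icc (0:ℝ) 1, ∀ x ∈ Set.Ici (0:ℝ), 0 ≤ f t x)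
    (u : ℝ → ℝ) (hucont : ContinuousOn u (Set.Icc 0 1))
    (hunn : ∀ t ∈ Set.Icc (0:ℝ) 1, 0 ≤ u t)
    (hucone : ∀ t ∈ Set.Icc θ (1-θ),
      θ^3 * (1-2*θ) * sSup ((fun t => |u t|) '' Set.Icc (0:ℝ) 1) ≤ u t) :
    ContinuousOn (fun t => ∫ s in (0:ℝ)..1, H α k β η t s * f s (u s)) (Set.Icc 0 1) ∧
    (∀ t ∈ Set.Icc (0:ℝ) 1, 0 ≤ ∫ s in (0:ℝ)..1, H α k β η t s * f s (u s)) ∧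
    (∀ t ∈ Set.Icc θ (1-θ),
      θ^3 * (1-2*θ) *
        sSup ((fun t => |∫ s in (0:ℝ)..1, H α k β η t s * f s (u s)|) '' Set.Icc (0:ℝ) 1)
        ≤ ∫ s in (0:ℝ)..1, H α k β η t s * f s (u s)) :=
  stmt18_general θ hθ n α β η hα hβ hη k hk0 f hf hfnn u hucont hunn
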